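/- arXiv:math-ph/0504082 — 3 statements merged into one kernel-verified Lean document; each statement's English description precedes it below -/
import Mathlib

section
/- Let P and N be positive integers (or more generally N any integer) and let a be an integer with 0 < a < P. Then the radial limit lim_{ε→0⁺} ∑_{n=0}^{∞} ψ_{2P}^{(a)}(n) e^{iπn²(N + iε)/(2P)} exists and equals (1 − a/P) e^{iπa²N/(2P)}. -/
/-!
On the residue classes `n ≡ ±a (mod 2P)` picked out by `ψ`, the phase `e^{iπn²N/(2P)}` is the
constant `e^{iπa²N/(2P)}`, so the series is that constant times the real series
`∑ₖ (e^{-c(a+2Pk)²} - e^{-c(2P-a+2Pk)²})` with `c = πε/(2P)`. Each of its terms is the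
fraction `1 - a/P` of the telescoping term `e^{-c(2Pk)²} - e^{-c(2P(k+1))²}`, up to an error
bounded by the variation of the derivative of the Gaussian over that period. Summed over `k`
these errors are bounded by the total variation of the derivative on `(0, ∞)`, which is `O(√c)`
by scaling, while the telescoping terms sum to `1`.
-/

open Complex Finset

noncomputable section

/-- The odd periodic function `ψ_{2P}^{(a)}` of modulus `2P` : it is `1` on integers
congruent to `a`, `-1` on integers congruent to `-a`, and `0` otherwise. -/
def psi (P : ℕ) (a n : ℤ) : ℤ :=
  if (n : ZMod (2 * P)) = (a : ZMod (2 * P)) then 1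
  else if (n : ZMod (2 * P)) = ((-a : ℤ) : ZMod (2 * P)) then -1
  else 0

lemma natCast_ne_neg_natCast_zmod {P a : ℕ} (ha : 0 < a) (haP : a < P) :
    (a : ZMod (2 * P)) ≠ -a := by
  rw [ne_eq, eq_neg_iff_add_eq_zero, ← Nat.cast_add, ZMod.natCast_eq_zero_iff]
  exact fun h => by linarith [Nat.le_of_dvd (by omega) h]

lemma psi_natCast_val {P a : ℕ} (ha : 0 < a) (haP : a < P) (j : ZMod (2 * P)) :
    (psi P a j.val : ℂ) = (if j = a then 1 else 0) - (if j = -a then 1 else 0) := by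
  have : NeZero (2 * P) := ⟨by omega⟩
  have hne := natCast_ne_neg_natCast_zmod ha haP
  unfold psi
  push_cast
  simp only [ZMod.natCast_zmod_val]
  split_ifs <;> simp_all

lemma tsum_psi_mul {P a : ℕ} (ha : 0 < a) (haP : a < P) {F : ℕ → ℂ} (hF : Summable F) :
    ∑' n : ℕ, (psi P a n : ℂ) * F n
      = ∑' k : ℕ, (F (a + 2 * P * k) - F (2 * P - a + 2 * P * k)) := by
  have : NeZero (2 * P) := ⟨by omega⟩
  have hsum : Summable fun n : ℕ => (psi P a n : ℂ) * F n :=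
    hF.norm.of_norm_bounded fun n => by
      rw [norm_mul]
      refine mul_le_of_le_one_left (norm_nonneg _) ?_
      unfold psi; split_ifs <;> simp
  have hperiodic : ∀ (j : ZMod (2 * P)) (m : ℕ),
      psi P a ((j.val + 2 * P * m : ℕ) : ℤ) = psi P a j.val := by
    intro j m
    unfold psi
    have h0 : ((2 * P : ℕ) : ZMod (2 * P)) = 0 := ZMod.natCast_self _
    push_cast at h0 ⊢
    rw [h0, zero_mul, add_zero]
  rw [Nat.sumByResidueClasses hsum (2 * P)]
  simp_rw [hperiodic, tsum_mul_left, psi_natCast_val ha haP, sub_mul, ite_mul, one_mul, zero_mul,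
    sum_sub_distrib, sum_ite_eq', mem_univ, if_true]
  have ha0 : (a : ZMod (2 * P)) ≠ 0 := by
    rw [ne_eq, ZMod.natCast_eq_zero_iff]; exact Nat.not_dvd_of_pos_of_lt ha (by omega)
  rw [ZMod.neg_val, if_neg ha0, ZMod.val_natCast_of_lt (by omega)]
  have hinj : ∀ c : ℕ, Summable fun k : ℕ => F (c + 2 * P * k) := fun c =>
    hF.comp_injective ((add_right_injective c).comp (mul_right_injective₀ (by omega)))
  exact ((hinj _).tsum_sub (hinj _)).symm

open Real MeasureTheory Filter Set intervalIntegral Topology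

section EulerMaclaurin

variable {f w w' w'' : ℝ → ℝ}

lemma intervalIntegrable_of_integrableOn_Ioi (hf : IntegrableOn f (Ioi 0)) {x y : ℝ}
    (hx : 0 ≤ x) (hy : 0 ≤ y) : IntervalIntegrable f volume x y :=
  intervalIntegrable_iff.mpr (hf.mono_set fun _ ht => lt_of_le_of_lt (le_min hx hy) ht.1)

lemma abs_sub_le_integral_abs_deriv (hw : ∀ t, HasDerivAt w (w' t) t)
    {u v x y : ℝ} (hw' : IntervalIntegrable w' volume u v)
    (hux : u ≤ x) (hxy : x ≤ y) (hyv : y ≤ v) : |w y - w x| ≤ ∫ t in u..v, |w' t| := by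
  have hxy' : IntervalIntegrable w' volume x y :=
    hw'.mono_set (uIcc_subset_uIcc (mem_uIcc_of_le hux (hxy.trans hyv))
      (mem_uIcc_of_le (hux.trans hxy) hyv))
  rw [← integral_eq_sub_of_hasDerivAt (fun t _ => hw t) hxy']
  calc |∫ t in x..y, w' t| ≤ ∫ t in x..y, |w' t| := abs_integral_le_integral_abs hxy
    _ ≤ ∫ t in u..v, |w' t| :=
      integral_mono_interval hux hxy hyv (Eventually.of_forall fun _ => abs_nonneg _) hw'.abs

lemma hasSum_integral_abs_nat_mul (hf : IntegrableOn f (Ioi 0)) {L : ℝ} (hL : 0 < L) :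
    HasSum (fun k : ℕ => ∫ t in L * k..L * (k + 1), |f t|) (∫ t in Ioi 0, |f t|) := by
  rw [hasSum_iff_tendsto_nat_of_nonneg fun k => integral_nonneg
    (by gcongr; linarith) fun _ _ => abs_nonneg _]
  have hpartial : ∀ n : ℕ, ∑ k ∈ range n, ∫ t in L * k..L * (k + 1), |f t|
      = ∫ t in (0 : ℝ)..L * n, |f t| := by
    intro n
    have := sum_integral_adjacent_intervals (a := fun k : ℕ => L * k) (f := fun t => |f t|)
      (μ := volume) (n := n) fun k _ =>
        (intervalIntegrable_of_integrableOn_Ioi hf.abs (by positivity) (by positivity))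
    simpa using this
  simp_rw [hpartial]
  exact intervalIntegral_tendsto_integral_Ioi 0 hf.abs
    (tendsto_natCast_atTop_atTop.const_mul_atTop hL)

lemma abs_integral_sub_mul_le {x y c V : ℝ} (hxy : x ≤ y) (hf : IntervalIntegrable f volume x y)
    (hV : ∀ t ∈ Icc x y, |f t - c| ≤ V) :
    |(∫ t in x..y, f t) - (y - x) * c| ≤ (y - x) * V := by
  have h := norm_integral_le_of_norm_le_const (a := x) (b := y) (f := fun t => f t - c) (C := V)
    fun t ht => hV t (Ioc_subset_Icc_self (uIoc_of_le hxy ▸ ht))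
  rwa [integral_sub hf intervalIntegrable_const, intervalIntegral.integral_const, smul_eq_mul,
    Real.norm_eq_abs, abs_of_nonneg (sub_nonneg.mpr hxy), mul_comm V] at h

lemma abs_sub_sub_div_mul_sub_le (hw : ∀ t, HasDerivAt w (w' t) t)
    (hw' : ∀ t, HasDerivAt w' (w'' t) t) {u L α β : ℝ}
    (hw'i : IntervalIntegrable w' volume u (u + L))
    (hw''i : IntervalIntegrable w'' volume u (u + L))
    (hL : 0 < L) (hα : 0 ≤ α) (hαβ : α ≤ β) (hβ : β ≤ L) :
    |(w (α + u) - w (β + u)) - (β - α) / L * (w u - w (u + L))|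
      ≤ 2 * L * ∫ t in u..u + L, |w'' t| := by
  set V := ∫ t in u..u + L, |w'' t|
  have hosc : ∀ t ∈ Icc u (u + L), |w' t - w' u| ≤ V := fun t ht =>
    abs_sub_le_integral_abs_deriv hw' hw''i le_rfl ht.1 ht.2
  have hsub : IntervalIntegrable w' volume (α + u) (β + u) :=
    hw'i.mono_set (uIcc_subset_uIcc (mem_uIcc_of_le (by linarith) (by linarith))
      (mem_uIcc_of_le (by linarith) (by linarith)))
  have hshort : |(w (β + u) - w (α + u)) - (β - α) * w' u| ≤ (β - α) * V := by
    rw [← integral_eq_sub_of_hasDerivAt (fun t _ => hw t) hsub]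
    have h := abs_integral_sub_mul_le (by linarith) hsub
      fun t ht => hosc t ⟨by linarith [ht.1], by linarith [ht.2]⟩
    rwa [add_sub_add_right_eq_sub] at h
  have hlong : |(w (u + L) - w u) - L * w' u| ≤ L * V := by
    rw [← integral_eq_sub_of_hasDerivAt (fun t _ => hw t) hw'i]
    have h := abs_integral_sub_mul_le (by linarith) hw'i hosc
    rwa [add_sub_cancel_left] at h
  have hm : (β - α) / L * L = β - α := div_mul_cancel₀ _ hL.ne'
  have hm0 : 0 ≤ (β - α) / L := div_nonneg (by linarith) hL.le
  calc |(w (α + u) - w (β + u)) - (β - α) / L * (w u - w (u + L))|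
      = |(β - α) / L * ((w (u + L) - w u) - L * w' u)
          - ((w (β + u) - w (α + u)) - (β - α) * w' u)| := by
        congr 1; linear_combination (w' u) * hm
    _ ≤ (β - α) / L * (L * V) + (β - α) * V := by
        refine (abs_sub _ _).trans (add_le_add ?_ hshort)
        rw [abs_mul, abs_of_nonneg hm0]
        exact mul_le_mul_of_nonneg_left hlong hm0
    _ ≤ 2 * L * V := by
        have hV : 0 ≤ V := integral_nonneg (by linarith) fun _ _ => abs_nonneg _
        rw [← mul_assoc, hm]; nlinarith

lemma hasSum_sub_nat_mul (hw : ∀ t, HasDerivAt w (w' t) t) (hw'i : IntegrableOn w' (Ioi 0))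
    (hw_top : Tendsto w atTop (𝓝 0)) {L : ℝ} (hL : 0 < L) :
    HasSum (fun k : ℕ => w (L * k) - w (L * (k + 1))) (w 0) := by
  have hsum : Summable fun k : ℕ => w (L * k) - w (L * (k + 1)) :=
    (hasSum_integral_abs_nat_mul hw'i hL).summable.of_norm_bounded fun k => by
      rw [Real.norm_eq_abs, abs_sub_comm]
      exact abs_sub_le_integral_abs_deriv hw
        (intervalIntegrable_of_integrableOn_Ioi hw'i (by positivity) (by positivity))
        le_rfl (by gcongr; linarith) le_rfl
  rw [hsum.hasSum_iff_tendsto_nat]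
  have hpartial : ∀ n : ℕ,
      ∑ k ∈ range n, (w (L * k) - w (L * (k + 1))) = w 0 - w (L * n) := by
    intro n
    simpa using sum_range_sub' (fun k : ℕ => w (L * k)) n
  simp_rw [hpartial]
  simpa using tendsto_const_nhds.sub
    (hw_top.comp (tendsto_natCast_atTop_atTop.const_mul_atTop hL))

theorem abs_tsum_sub_sub_div_mul_le (hw : ∀ t, HasDerivAt w (w' t) t)
    (hw' : ∀ t, HasDerivAt w' (w'' t) t) (hw'i : IntegrableOn w' (Ioi 0))
    (hw''i : IntegrableOn w'' (Ioi 0)) (hw_top : Tendsto w atTop (𝓝 0)) {L α β : ℝ}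
    (hL : 0 < L) (hα : 0 ≤ α) (hαβ : α ≤ β) (hβ : β ≤ L) :
    |∑' k : ℕ, (w (α + L * k) - w (β + L * k)) - (β - α) / L * w 0|
      ≤ 2 * L * ∫ t in Ioi 0, |w'' t| := by
  set m := (β - α) / L
  have hperiod : ∀ k : ℕ,
      ‖(w (α + L * k) - w (β + L * k)) - m * (w (L * k) - w (L * (k + 1)))‖
        ≤ 2 * L * ∫ t in L * k..L * (k + 1), |w'' t| := by
    intro k
    have hk : (0 : ℝ) ≤ L * k := by positivity
    rw [Real.norm_eq_abs, mul_add_one]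
    exact abs_sub_sub_div_mul_sub_le hw hw'
      (intervalIntegrable_of_integrableOn_Ioi hw'i hk (by positivity))
      (intervalIntegrable_of_integrableOn_Ioi hw''i hk (by positivity)) hL hα hαβ hβ
  have hbound := (hasSum_integral_abs_nat_mul hw''i hL).mul_left (2 * L)
  have herr := hbound.summable.of_norm_bounded hperiod
  have hsum : HasSum (fun k : ℕ => w (α + L * k) - w (β + L * k))
      ((∑' k : ℕ, ((w (α + L * k) - w (β + L * k)) - m * (w (L * k) - w (L * (k + 1)))))
        + m * w 0) := by
    simpa using herr.hasSum.add ((hasSum_sub_nat_mul hw hw'i hw_top hL).mul_left m)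
  rw [hsum.tsum_eq, add_sub_cancel_right]
  exact tsum_of_norm_bounded hbound hperiod

variable {g g' g'' : ℝ → ℝ}

theorem tendsto_tsum_comp_mul_sub_comp_mul (hg : ∀ t, HasDerivAt g (g' t) t)
    (hg' : ∀ t, HasDerivAt g' (g'' t) t) (hg'i : IntegrableOn g' (Ioi 0))
    (hg''i : IntegrableOn g'' (Ioi 0)) (hg_top : Tendsto g atTop (𝓝 0)) {L α β : ℝ}
    (hL : 0 < L) (hα : 0 ≤ α) (hαβ : α ≤ β) (hβ : β ≤ L) :
    Tendsto (fun h => ∑' k : ℕ, (g (h * (α + L * k)) - g (h * (β + L * k)))) (𝓝[>] 0)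
      (𝓝 ((β - α) / L * g 0)) := by
  set K := ∫ t in Ioi 0, |g'' t|
  have hbound : ∀ h ∈ Ioi (0 : ℝ),
      ‖∑' k : ℕ, (g (h * (α + L * k)) - g (h * (β + L * k))) - (β - α) / L * g 0‖
        ≤ 2 * L * K * h := by
    intro h (hh : 0 < h)
    have hscale : ∫ t in Ioi 0, |h * (h * g'' (h * t))| = h * K := by
      simp_rw [abs_mul, abs_of_pos hh]
      rw [MeasureTheory.integral_const_mul, MeasureTheory.integral_const_mul,
        integral_comp_mul_left_Ioi (fun t => |g'' t|) 0 hh,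
        mul_zero, smul_eq_mul]
      field_simp
      rfl
    have hint : ∀ {f : ℝ → ℝ}, IntegrableOn f (Ioi 0) →
        IntegrableOn (fun t => h * f (h * t)) (Ioi 0) := fun {f} hf =>
      Integrable.const_mul
        ((integrableOn_Ioi_comp_mul_left_iff f 0 hh).mpr (by rwa [mul_zero])) h
    have hderiv : ∀ {f f' : ℝ → ℝ}, (∀ t, HasDerivAt f (f' t) t) →
        ∀ t, HasDerivAt (fun s => f (h * s)) (h * f' (h * t)) t := fun hf t => by
      simpa [mul_comm, Function.comp_def] using
        (hf (h * t)).comp t ((hasDerivAt_id t).const_mul h)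
    have := abs_tsum_sub_sub_div_mul_le (hderiv hg) (fun t => (hderiv hg' t).const_mul h)
      (hint hg'i) (Integrable.const_mul (hint hg''i) h)
      (hg_top.comp (tendsto_id.const_mul_atTop hh)) hL hα hαβ hβ
    rw [mul_zero, hscale] at this
    rw [Real.norm_eq_abs]
    linarith
  have hlim : Tendsto (fun h => 2 * L * K * h) (𝓝[>] 0) (𝓝 0) :=
    ((continuous_const_mul _).tendsto' 0 0 (mul_zero _)).mono_left nhdsWithin_le_nhds
  simpa using (squeeze_zero_norm' (eventually_nhdsWithin_of_forall hbound) hlim).add_const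
    ((β - α) / L * g 0)

end EulerMaclaurin

theorem tendsto_tsum_exp_neg_mul_sq_sub {L α β : ℝ} (hL : 0 < L) (hα : 0 ≤ α)
    (hαβ : α ≤ β) (hβ : β ≤ L) :
    Tendsto (fun c => ∑' k : ℕ, (rexp (-c * (α + L * k) ^ 2) - rexp (-c * (β + L * k) ^ 2)))
      (𝓝[>] 0) (𝓝 ((β - α) / L)) := by
  have hg : ∀ t, HasDerivAt (fun t => rexp (-t ^ 2)) (-2 * (t * rexp (-t ^ 2))) t := by
    intro t
    convert (HasDerivAt.exp (f := fun t => -t ^ 2) (hasDerivAt_pow 2 t).neg) using 1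
    push_cast; ring
  have hg' : ∀ t, HasDerivAt (fun t => -2 * (t * rexp (-t ^ 2)))
      (4 * (t ^ 2 * rexp (-t ^ 2)) - 2 * rexp (-t ^ 2)) t := fun t =>
    (((hasDerivAt_id' t).mul (hg t)).const_mul (-2)).congr_deriv (by ring)
  have hint0 : Integrable fun t : ℝ => rexp (-t ^ 2) := by
    simpa using integrable_exp_neg_mul_sq one_pos
  have hint1 : Integrable fun t : ℝ => t * rexp (-t ^ 2) := by
    simpa using integrable_mul_exp_neg_mul_sq one_pos
  have hint2 : Integrable fun t : ℝ => t ^ 2 * rexp (-t ^ 2) := by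
    simpa using integrable_rpow_mul_exp_neg_mul_sq one_pos (s := 2) (by norm_num)
  have hg_top : Tendsto (fun t : ℝ => rexp (-t ^ 2)) atTop (𝓝 0) :=
    tendsto_exp_atBot.comp (tendsto_neg_atTop_atBot.comp (tendsto_pow_atTop two_ne_zero))
  have hlim := tendsto_tsum_comp_mul_sub_comp_mul hg hg' (hint1.const_mul (-2)).integrableOn
    ((hint2.const_mul 4).sub (hint0.const_mul 2)).integrableOn hg_top hL hα hαβ hβ
  have hsqrt : Tendsto Real.sqrt (𝓝[>] 0) (𝓝[>] 0) := by
    simpa using Real.continuous_sqrt.continuousWithinAt (s := Ioi 0) (x := 0)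
      |>.tendsto_nhdsWithin fun c (hc : 0 < c) => Set.mem_Ioi.mpr (Real.sqrt_pos.mpr hc)
  refine ((hlim.comp hsqrt).congr' (eventually_nhdsWithin_of_forall fun c hc => ?_)).trans ?_
  · simp only [Function.comp_apply, mul_pow, Real.sq_sqrt (le_of_lt hc), neg_mul]
  · simp

lemma summable_cexp_pi_mul_I_mul_sq_mul {τ : ℂ} (hτ : 0 < τ.im) :
    Summable fun n : ℕ => cexp (π * I * (n : ℂ) ^ 2 * τ) :=
  (((summable_jacobiTheta₂_term_iff 0 τ).mpr hτ).comp_injective Nat.cast_injective).congr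
    fun n => by simp [jacobiTheta₂_term]

lemma cexp_sq_mul_eq_of_sq_eq {P : ℕ} (hP : 0 < P) (N s : ℤ) (ε : ℝ) {x y : ℂ}
    (hxy : x ^ 2 = y ^ 2 + 4 * P * s) :
    cexp (π * I * x ^ 2 * (N + I * ε) / (2 * P))
      = cexp (π * I * y ^ 2 * N / (2 * P)) * cexp (-(π * ε / (2 * P)) * x ^ 2) := by
  have hP' : (P : ℂ) ≠ 0 := Nat.cast_ne_zero.mpr hP.ne'
  have : π * I * x ^ 2 * (N + I * ε) / (2 * P)
      = (π * I * y ^ 2 * N / (2 * P) + -(π * ε / (2 * P)) * x ^ 2)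
        + (s * N : ℤ) * (2 * π * I) := by
    rw [hxy]
    push_cast
    field_simp
    ring_nf
    rw [I_sq]
    ring
  rw [this, Complex.exp_add, exp_int_mul_two_pi_mul_I, mul_one, Complex.exp_add]

lemma tsum_psi_mul_cexp_eq {P a : ℕ} (ha : 0 < a) (haP : a < P) (N : ℤ) {ε : ℝ}
    (hε : 0 < ε) :
    ∑' n : ℕ, (psi P a n : ℂ) * cexp (π * I * (n : ℂ) ^ 2 * (N + I * ε) / (2 * P))
      = cexp (π * I * (a : ℂ) ^ 2 * N / (2 * P))
        * ↑(∑' k : ℕ, (rexp (-(π * ε / (2 * P)) * (a + 2 * P * k) ^ 2)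
          - rexp (-(π * ε / (2 * P)) * ((2 * P - a) + 2 * P * k) ^ 2))) := by
  have hP : 0 < P := by omega
  have hF : Summable fun n : ℕ => cexp (π * I * (n : ℂ) ^ 2 * (N + I * ε) / (2 * P)) :=
    (summable_cexp_pi_mul_I_mul_sq_mul (τ := (N + I * ε) / (2 * P))
      (by rw [Complex.div_im]; simp; positivity)).congr
      fun n => by rw [mul_div_assoc]
  have ha2P : a ≤ 2 * P := by omega
  rw [tsum_psi_mul ha haP hF, Complex.ofReal_tsum, ← tsum_mul_left]
  refine tsum_congr fun k => ?_
  rw [cexp_sq_mul_eq_of_sq_eq hP N (a * k + P * k ^ 2) ε (y := a) (by push_cast; ring),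
    cexp_sq_mul_eq_of_sq_eq hP N (-a * (k + 1) + P * (k + 1) ^ 2) ε (y := a)
      (by push_cast [Nat.cast_sub ha2P]; ring)]
  push_cast [Nat.cast_sub ha2P]
  ring

/-- for a positive integer `P`, any integer `N`, and an integer `a` with
`0 < a < P`, the radial limit `lim_{ε→0⁺} ∑_{n=0}^{∞} ψ_{2P}^{(a)}(n) e^{iπn²(N + iε)/(2P)}`
exists and equals `(1 − a/P) e^{iπa²N/(2P)}`. -/
theorem eichler_radial_limit_at_integer (P : ℕ) (hP : 0 < P) (N a : ℤ)
    (ha : 0 < a) (haP : a < P) :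
    Filter.Tendsto
      (fun ε : ℝ => ∑' n : ℕ,
        (psi P a n : ℂ) *
          Complex.exp (Real.pi * I * (n : ℂ) ^ 2 * ((N : ℂ) + I * ε) / (2 * P)))
      (nhdsWithin 0 (Set.Ioi 0))
      (nhds ((1 - (a : ℂ) / (P : ℂ)) *
        Complex.exp (Real.pi * I * (a : ℂ) ^ 2 * (N : ℂ) / (2 * P)))) := by
  lift a to ℕ using ha.le
  norm_cast at ha haP
  simp only [Int.cast_natCast]
  have hscale : Tendsto (fun ε : ℝ => π * ε / (2 * P)) (𝓝[>] 0) (𝓝[>] 0) := by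
    simpa using ((continuous_const_mul π).div_const (2 * P : ℝ)).continuousWithinAt
      (s := Ioi 0) (x := 0) |>.tendsto_nhdsWithin fun ε (hε : 0 < ε) =>
        Set.mem_Ioi.mpr (by positivity)
  have hlim := (tendsto_tsum_exp_neg_mul_sq_sub (L := 2 * P) (α := a) (β := 2 * P - a)
    (by positivity) (by positivity) (by linarith [(by exact_mod_cast haP : (a : ℝ) < P)])
    (by linarith [(by positivity : (0 : ℝ) ≤ a)])).comp hscale
  have hval : (1 - (a : ℂ) / P) * cexp (π * I * (a : ℂ) ^ 2 * N / (2 * P))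
      = cexp (π * I * (a : ℂ) ^ 2 * N / (2 * P)) * ↑((2 * P - a - a) / (2 * P) : ℝ) := by
    have hP' : (P : ℂ) ≠ 0 := Nat.cast_ne_zero.mpr hP.ne'
    push_cast
    field_simp
    ring
  rw [hval]
  exact (((continuous_ofReal.tendsto _).comp hlim).const_mul _).congr'
    (eventually_nhdsWithin_of_forall fun ε hε => (tsum_psi_mul_cexp_eq ha haP N hε).symm)
end
end

section
/- Let L be the symmetric 7×7 integer matrix with L_{ii} = −2 for all i, L_{ij} = L_{ji} = 1 whenever {i,j} is an edge of the E₇ Dynkin diagram (edges {1,2}, {2,3}, {3,4}, {4,5}, {5,6}, {4,7}), and L_{ij} = 0 otherwise. Then ∑_{x ∈ {0,1}⁷} i^{xᵀLx} = 0, where i = √−1. (Equivalently, the invariant τ₃ of the Seifert manifold M(2,3,4), defined via this linking matrix, vanishes.) -/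
open Complex Finset

noncomputable section

/-- The linking matrix of the plumbing presentation of `M(2,3,4)` along the `E₇` Dynkin
diagram with all framings `−2`: diagonal entries `−2`, entries `1` on the edges
`{1,2}, {2,3}, {3,4}, {4,5}, {5,6}, {4,7}` (here written 0-indexed), and `0` otherwise. -/
def E7mat : Matrix (Fin 7) (Fin 7) ℤ := fun i j =>
  if i = j then -2
  else if (min (i : ℕ) (j : ℕ), max (i : ℕ) (j : ℕ)) ∈
      [(0, 1), (1, 2), (2, 3), (3, 4), (4, 5), (3, 6)] then 1
  else 0

lemma I_zpow_mod_four (n : ℤ) : (I : ℂ) ^ n = I ^ (n % 4).toNat := by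
  conv_lhs => rw [← Int.mul_ediv_add_emod n 4]
  rw [zpow_add₀ I_ne_zero, zpow_mul,
    ← zpow_natCast I (n % 4).toNat, Int.toNat_of_nonneg (Int.emod_nonneg n (by norm_num)),
    show (4:ℤ) = ((4:ℕ):ℤ) from rfl, zpow_natCast, Complex.I_pow_four, one_zpow, one_mul]

set_option maxRecDepth 100000 in
set_option maxHeartbeats 1000000 in
/-- the invariant `τ₃` of the Seifert manifold `M(2,3,4)` vanishes:
`∑_{x ∈ {0,1}⁷} i^{xᵀLx} = 0` for the `E₇` linking matrix `L`. -/
theorem tau3_E7_vanishes :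
    ∑ x : Fin 7 → Fin 2,
      (I : ℂ) ^ (∑ i : Fin 7, ∑ j : Fin 7, E7mat i j * ((x i : ℕ) : ℤ) * ((x j : ℕ) : ℤ)) =
      0 := by
  simp_rw [I_zpow_mod_four]
  rw [Finset.sum_comp (fun k : ℕ => (I : ℂ) ^ k)
    (fun x : Fin 7 → Fin 2 =>
      ((∑ i : Fin 7, ∑ j : Fin 7, E7mat i j * ((x i : ℕ) : ℤ) * ((x j : ℕ) : ℤ)) % 4).toNat)]
  have himg : (Finset.univ.image fun x : Fin 7 → Fin 2 =>
      ((∑ i : Fin 7, ∑ j : Fin 7, E7mat i j * ((x i : ℕ) : ℤ) * ((x j : ℕ) : ℤ)) % 4).toNat)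
      = {0, 2} := by decide
  rw [himg]
  have h0 : (Finset.univ.filter fun x : Fin 7 → Fin 2 =>
      ((∑ i : Fin 7, ∑ j : Fin 7, E7mat i j * ((x i : ℕ) : ℤ) * ((x j : ℕ) : ℤ)) % 4).toNat
        = 0).card = 64 := by decide
  have h2 : (Finset.univ.filter fun x : Fin 7 → Fin 2 =>
      ((∑ i : Fin 7, ∑ j : Fin 7, E7mat i j * ((x i : ℕ) : ℤ) * ((x j : ℕ) : ℤ)) % 4).toNat
        = 2).card = 64 := by decide
  rw [Finset.sum_insert (by norm_num), Finset.sum_singleton, h0, h2]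
  simp [Complex.I_sq]
end
end

section
/- Let K be a positive integer divisible by 4, and let L be the symmetric (K+2)×(K+2) integer matrix with L_{ii} = −2 for all i, L_{ij} = L_{ji} = 1 whenever {i,j} is an edge of the D_{K+2} Dynkin diagram (edges {j, j+1} for 1 ≤ j ≤ K−1 together with {K, K+1} and {K, K+2}), and L_{ij} = 0 otherwise. Then ∑_{x ∈ {0,1}^{K+2}} i^{xᵀLx} = 0, where i = √−1. (Equivalently, the invariant τ₃ of the prism manifold M(2,2,K), defined via this linking matrix, vanishes when K ≡ 0 mod 4.) -/
open Complex Finset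

noncomputable section

/-- The linking matrix of the plumbing presentation of the prism manifold `M(2,2,K)` along
the `D_{K+2}` Dynkin diagram with all framings `−2`: diagonal entries `−2`, entries `1` on
the edges `{j, j+1}` for `1 ≤ j ≤ K−1` together with `{K, K+1}` and `{K, K+2}` (written
here 0-indexed), and `0` otherwise. -/
def Dmat (K : ℕ) : Matrix (Fin (K + 2)) (Fin (K + 2)) ℤ := fun i j =>
  if i = j then -2
  else if (max (i : ℕ) (j : ℕ) = min (i : ℕ) (j : ℕ) + 1 ∧ max (i : ℕ) (j : ℕ) ≤ K - 1)
      ∨ (min (i : ℕ) (j : ℕ) = K - 1 ∧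
          (max (i : ℕ) (j : ℕ) = K ∨ max (i : ℕ) (j : ℕ) = K + 1)) then 1
  else 0

namespace Tau3Aux

/-- The quadratic form of the linking matrix. -/
def Qf (K : ℕ) (x : Fin (K + 2) → Fin 2) : ℤ :=
  ∑ i, ∑ j, Dmat K i j * ((x i : ℕ) : ℤ) * ((x j : ℕ) : ℤ)

/-- Partial sum with first coordinate fixed to `1`. -/
def A (K : ℕ) : ℂ := ∑ x : Fin (K + 1) → Fin 2, (I : ℂ) ^ Qf K (Fin.cons 1 x)

/-- Partial sum with first coordinate fixed to `0`. -/
def B (K : ℕ) : ℂ := ∑ x : Fin (K + 1) → Fin 2, (I : ℂ) ^ Qf K (Fin.cons 0 x)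

lemma sum_split (n : ℕ) (f : (Fin (n + 1) → Fin 2) → ℂ) :
    ∑ x : Fin (n + 1) → Fin 2, f x
      = (∑ x : Fin n → Fin 2, f (Fin.cons 0 x)) + ∑ x : Fin n → Fin 2, f (Fin.cons 1 x) := by
  rw [← Equiv.sum_comp (Fin.consEquiv (fun _ : Fin (n + 1) => Fin 2)) f]
  rw [Fintype.sum_prod_type, Fin.sum_univ_two]
  rfl

lemma Dmat_succ_succ (K : ℕ) (hK : 1 ≤ K) (i j : Fin (K + 2)) :
    Dmat (K + 1) i.succ j.succ = Dmat K i j := by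
  rcases eq_or_ne i j with h | h
  · simp [Dmat, h]
  · have h' : i.succ ≠ j.succ := fun hc => h (Fin.succ_injective _ hc)
    simp only [Dmat, if_neg h, if_neg h', Fin.val_succ]
    have hmax : max ((i : ℕ) + 1) ((j : ℕ) + 1) = max (i : ℕ) (j : ℕ) + 1 := by
      rcases le_total (i : ℕ) (j : ℕ) with hle | hle <;>
        simp [max_eq_right, max_eq_left, hle]
    have hmin : min ((i : ℕ) + 1) ((j : ℕ) + 1) = min (i : ℕ) (j : ℕ) + 1 := by
      rcases le_total (i : ℕ) (j : ℕ) with hle | hle <;>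
        simp [min_eq_right, min_eq_left, hle]
    simp only [hmax, hmin]
    apply if_congr _ rfl rfl
    set a := max (i : ℕ) (j : ℕ)
    set b := min (i : ℕ) (j : ℕ)
    omega

lemma Dmat_zero_succ (K : ℕ) (hK : 1 ≤ K) (j : Fin (K + 2)) :
    Dmat (K + 1) 0 j.succ = if j = 0 then 1 else 0 := by
  have h0 : ((0 : Fin (K + 3)) : ℕ) = 0 := rfl
  have hne : (0 : Fin (K + 3)) ≠ j.succ := (Fin.succ_ne_zero j).symm
  simp only [Dmat, if_neg hne, Fin.val_succ, h0]
  have hmax : max 0 ((j : ℕ) + 1) = (j : ℕ) + 1 := by omega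
  have hmin : min 0 ((j : ℕ) + 1) = 0 := by omega
  simp only [hmax, hmin]
  rcases eq_or_ne j 0 with hj | hj
  · subst hj
    have h00 : ((0 : Fin (K + 2)) : ℕ) = 0 := rfl
    have hle : (0 : ℕ) + 1 ≤ K + 1 - 1 := by omega
    simp [h00, hle]
    omega
  · have hjv : (j : ℕ) ≠ 0 := fun hc => hj (Fin.ext hc)
    have hc : ¬(((j : ℕ) + 1 = 0 + 1 ∧ (j : ℕ) + 1 ≤ K + 1 - 1) ∨
        (0 = K + 1 - 1 ∧ ((j : ℕ) + 1 = K + 1 ∨ (j : ℕ) + 1 = K + 1 + 1))) := by omega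
    rw [if_neg hj, if_neg hc]

lemma Dmat_symm (K : ℕ) (i j : Fin (K + 2)) : Dmat K i j = Dmat K j i := by
  rcases eq_or_ne i j with h | h
  · rw [h]
  · simp only [Dmat, if_neg h, if_neg (Ne.symm h),
      max_comm ((i : ℕ)) ((j : ℕ)), min_comm ((i : ℕ)) ((j : ℕ))]

lemma Dmat_succ_zero (K : ℕ) (hK : 1 ≤ K) (j : Fin (K + 2)) :
    Dmat (K + 1) j.succ 0 = if j = 0 then 1 else 0 := by
  rw [Dmat_symm, Dmat_zero_succ K hK]

lemma Qf_cons (K : ℕ) (hK : 1 ≤ K) (y : Fin 2) (x : Fin (K + 2) → Fin 2) :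
    Qf (K + 1) (Fin.cons y x) =
      -2 * ((y : ℕ) : ℤ) * ((y : ℕ) : ℤ) + 2 * ((y : ℕ) : ℤ) * ((x 0 : ℕ) : ℤ) + Qf K x := by
  unfold Qf
  simp only [Fin.sum_univ_succ, Fin.cons_zero, Fin.cons_succ, Dmat_succ_succ K hK,
    Dmat_zero_succ K hK, Dmat_succ_zero K hK, Fin.succ_ne_zero,
    eq_self_iff_true, if_true, if_false, ite_true, ite_false, zero_mul, mul_zero,
    one_mul, Finset.sum_const_zero, add_zero, zero_add, ne_eq, not_false_iff]
  have h00 : Dmat (K + 1) 0 0 = -2 := if_pos rfl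
  rw [h00]
  simp only [mul_comm, mul_left_comm]
  ring

lemma I_zpow_two : (I : ℂ) ^ (2 : ℤ) = -1 := by
  rw [show (2 : ℤ) = ((2 : ℕ) : ℤ) from rfl, zpow_natCast, Complex.I_sq]

lemma I_zpow_neg_two : (I : ℂ) ^ (-2 : ℤ) = -1 := by
  rw [show (-2 : ℤ) = -(2 : ℤ) from rfl, zpow_neg, I_zpow_two]
  norm_num

lemma A_succ (K : ℕ) (hK : 1 ≤ K) : A (K + 1) = A K - B K := by
  unfold A
  rw [sum_split (K + 1) (fun x => (I : ℂ) ^ Qf (K + 1) (Fin.cons 1 x))]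
  have e0 : ∀ x : Fin (K + 1) → Fin 2,
      Qf (K + 1) (Fin.cons 1 (Fin.cons 0 x)) = -2 + Qf K (Fin.cons 0 x) := by
    intro x
    rw [Qf_cons K hK]
    norm_num [Fin.cons_zero, Fin.val_one, Fin.val_zero]
  have e1 : ∀ x : Fin (K + 1) → Fin 2,
      Qf (K + 1) (Fin.cons 1 (Fin.cons 1 x)) = Qf K (Fin.cons 1 x) := by
    intro x
    rw [Qf_cons K hK]
    norm_num [Fin.cons_zero, Fin.val_one]
  simp only [e0, e1, zpow_add₀ Complex.I_ne_zero, I_zpow_neg_two, neg_one_mul]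
  rw [Finset.sum_neg_distrib]
  unfold B
  ring

lemma B_succ (K : ℕ) (hK : 1 ≤ K) : B (K + 1) = B K + A K := by
  unfold B
  have e : ∀ x : Fin (K + 2) → Fin 2, Qf (K + 1) (Fin.cons 0 x) = Qf K x := by
    intro x
    rw [Qf_cons K hK]
    norm_num [Fin.val_zero]
  simp only [e]
  exact sum_split (K + 1) (fun x => (I : ℂ) ^ Qf K x)

lemma A_add_four (K : ℕ) (hK : 1 ≤ K) : A (K + 4) = -4 * A K := by
  have a2 : A (K + 2) = A (K + 1) - B (K + 1) := A_succ (K + 1) (by omega)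
  have b2 : B (K + 2) = B (K + 1) + A (K + 1) := B_succ (K + 1) (by omega)
  have a3 : A (K + 3) = A (K + 2) - B (K + 2) := A_succ (K + 2) (by omega)
  have b3 : B (K + 3) = B (K + 2) + A (K + 2) := B_succ (K + 2) (by omega)
  have a4 : A (K + 4) = A (K + 3) - B (K + 3) := A_succ (K + 3) (by omega)
  rw [a4, a3, b3, a2, b2, A_succ K hK, B_succ K hK]
  ring

lemma B_add_four (K : ℕ) (hK : 1 ≤ K) : B (K + 4) = -4 * B K := by
  have a2 : A (K + 2) = A (K + 1) - B (K + 1) := A_succ (K + 1) (by omega)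
  have b2 : B (K + 2) = B (K + 1) + A (K + 1) := B_succ (K + 1) (by omega)
  have a3 : A (K + 3) = A (K + 2) - B (K + 2) := A_succ (K + 2) (by omega)
  have b3 : B (K + 3) = B (K + 2) + A (K + 2) := B_succ (K + 2) (by omega)
  have b4 : B (K + 4) = B (K + 3) + A (K + 3) := B_succ (K + 3) (by omega)
  rw [b4, a3, b3, a2, b2, A_succ K hK, B_succ K hK]
  ring

lemma sum_empty_type (g : (Fin 0 → Fin 2) → ℂ) :
    ∑ x : Fin 0 → Fin 2, g x = g default := by
  rw [Fintype.sum_unique g]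
  exact congrArg g (Subsingleton.elim _ _)

lemma A_one : A 1 = -4 := by
  unfold A
  rw [sum_split 1 (fun x => (I : ℂ) ^ Qf 1 (Fin.cons 1 x))]
  rw [sum_split 0 (fun x => (I : ℂ) ^ Qf 1 (Fin.cons 1 (Fin.cons 0 x)))]
  rw [sum_split 0 (fun x => (I : ℂ) ^ Qf 1 (Fin.cons 1 (Fin.cons 1 x)))]
  rw [sum_empty_type, sum_empty_type, sum_empty_type, sum_empty_type]
  have q00 : Qf 1 (Fin.cons 1 (Fin.cons 0 (Fin.cons 0 default))) = -2 := by decide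
  have q01 : Qf 1 (Fin.cons 1 (Fin.cons 0 (Fin.cons 1 default))) = -2 := by decide
  have q10 : Qf 1 (Fin.cons 1 (Fin.cons 1 (Fin.cons 0 default))) = -2 := by decide
  have q11 : Qf 1 (Fin.cons 1 (Fin.cons 1 (Fin.cons 1 default))) = -2 := by decide
  rw [q00, q01, q10, q11, I_zpow_neg_two]
  ring

lemma B_one : B 1 = 0 := by
  unfold B
  rw [sum_split 1 (fun x => (I : ℂ) ^ Qf 1 (Fin.cons 0 x))]
  rw [sum_split 0 (fun x => (I : ℂ) ^ Qf 1 (Fin.cons 0 (Fin.cons 0 x)))]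
  rw [sum_split 0 (fun x => (I : ℂ) ^ Qf 1 (Fin.cons 0 (Fin.cons 1 x)))]
  rw [sum_empty_type, sum_empty_type, sum_empty_type, sum_empty_type]
  have q00 : Qf 1 (Fin.cons 0 (Fin.cons 0 (Fin.cons 0 default))) = 0 := by decide
  have q01 : Qf 1 (Fin.cons 0 (Fin.cons 0 (Fin.cons 1 default))) = -2 := by decide
  have q10 : Qf 1 (Fin.cons 0 (Fin.cons 1 (Fin.cons 0 default))) = -2 := by decide
  have q11 : Qf 1 (Fin.cons 0 (Fin.cons 1 (Fin.cons 1 default))) = -4 := by decide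
  rw [q00, q01, q10, q11, I_zpow_neg_two]
  have h4 : (I : ℂ) ^ (-4 : ℤ) = 1 := by
    rw [show (-4 : ℤ) = (-2) + (-2) from rfl, zpow_add₀ Complex.I_ne_zero, I_zpow_neg_two]
    ring
  rw [h4]
  norm_num

lemma key (m : ℕ) : A (4 * m + 4) + B (4 * m + 4) = 0 := by
  induction m with
  | zero =>
      show A 4 + B 4 = 0
      have a2 : A 2 = A 1 - B 1 := A_succ 1 le_rfl
      have b2 : B 2 = B 1 + A 1 := B_succ 1 le_rfl
      have a3 : A 3 = A 2 - B 2 := A_succ 2 (by omega)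
      have b3 : B 3 = B 2 + A 2 := B_succ 2 (by omega)
      have a4 : A 4 = A 3 - B 3 := A_succ 3 (by omega)
      have b4 : B 4 = B 3 + A 3 := B_succ 3 (by omega)
      rw [a4, b4, a3, b3, a2, b2, A_one, B_one]
      ring
  | succ m ih =>
      have hc : 4 * (m + 1) + 4 = (4 * m + 4) + 4 := by ring
      rw [hc, A_add_four (4 * m + 4) (by omega), B_add_four (4 * m + 4) (by omega)]
      linear_combination (-4 : ℂ) * ih

end Tau3Aux

/-- for `K` a positive multiple of `4`, the invariant `τ₃` of the prism
manifold `M(2,2,K)` vanishes: `∑_{x ∈ {0,1}^{K+2}} i^{xᵀLx} = 0` for the `D_{K+2}`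
linking matrix `L`. -/
theorem tau3_D_vanishes (K : ℕ) (hK : 0 < K) (h4 : 4 ∣ K) :
    ∑ x : Fin (K + 2) → Fin 2,
      (I : ℂ) ^ (∑ i, ∑ j, Dmat K i j * ((x i : ℕ) : ℤ) * ((x j : ℕ) : ℤ)) = 0 := by
  obtain ⟨m, rfl⟩ := h4
  have hm : m ≠ 0 := by omega
  obtain ⟨m', rfl⟩ := Nat.exists_eq_succ_of_ne_zero hm
  show (∑ x : Fin (4 * (m' + 1) + 2) → Fin 2, (I : ℂ) ^ Tau3Aux.Qf (4 * (m' + 1)) x) = 0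
  rw [Tau3Aux.sum_split (4 * (m' + 1) + 1)
    (fun x => (I : ℂ) ^ Tau3Aux.Qf (4 * (m' + 1)) x)]
  have e : 4 * (m' + 1) = 4 * m' + 4 := by ring
  rw [e]
  have h := Tau3Aux.key m'
  unfold Tau3Aux.A Tau3Aux.B at h
  linear_combination h
end
end
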